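/- arXiv:2107.01907 — 3 statements merged into one kernel-verified Lean document; each statement's English description precedes it below -/
import Mathlib

section
/- If a complex number a satisfies |a| < 1, |a − 1| ≥ 1 and |2a − 1| < 2, then the intersection of the closed unit disk D₀ with the closed disk D_{2a−1} of radius 1 centered at 2a−1 is contained in the union of the open disk of radius 1 centered at a and the closed disk of radius 1 centered at a − 1. -/
/-!
Both pairs `0, 2a - 1` and `a, a - 1` have midpoint `a - 1/2`. By Apollonius's theorem, a point
in both unit disks around the first pair but outside both around the second pair forces the first
pair to be closer together: `‖2a - 1‖ < 1`. Then `2‖a - 1‖ ≤ ‖2a - 1‖ + 1 < 2`, against `1 ≤ ‖a - 1‖`.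
-/

open Metric EuclideanGeometry

theorem dist_lt_dist_of_mem_inter_of_notMem_union {V P : Type*} [NormedAddCommGroup V]
    [InnerProductSpace ℝ V] [MetricSpace P] [NormedAddTorsor V P] {p q p' q' z : P} {r : ℝ}
    (hmid : midpoint ℝ p q = midpoint ℝ p' q') (hz : z ∈ closedBall p r ∩ closedBall q r)
    (hz' : z ∉ ball p' r ∪ closedBall q' r) : dist p q < dist p' q' := by
  simp only [Set.mem_inter_iff, Set.mem_union, mem_closedBall, mem_ball, not_or, not_lt,
    not_le] at hz hz'
  obtain ⟨hp, hq⟩ := hz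
  obtain ⟨hp', hq'⟩ := hz'
  have hr : 0 ≤ r := dist_nonneg.trans hp
  have inner_pair := dist_sq_add_dist_sq_eq_two_mul_dist_midpoint_sq_add_half_dist_sq z p q
  have outer_pair := dist_sq_add_dist_sq_eq_two_mul_dist_midpoint_sq_add_half_dist_sq z p' q'
  rw [← hmid] at outer_pair
  have hsq : dist p q ^ 2 < dist p' q' ^ 2 := by
    nlinarith [pow_le_pow_left₀ dist_nonneg hp 2, pow_le_pow_left₀ dist_nonneg hq 2,
      pow_le_pow_left₀ hr hp' 2, pow_lt_pow_left₀ hq' hr two_ne_zero]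
  exact lt_of_pow_lt_pow_left₀ 2 dist_nonneg hsq

theorem stmt_3_general (a : ℂ) (h2 : 1 ≤ ‖a - 1‖) :
    Metric.closedBall (0 : ℂ) 1 ∩ Metric.closedBall (2 * a - 1) 1 ⊆
      Metric.ball a 1 ∪ Metric.closedBall (a - 1) 1 := by
  intro z hz
  by_contra hz'
  have hmid : midpoint ℝ (0 : ℂ) (2 * a - 1) = midpoint ℝ a (a - 1) := by
    simp only [midpoint_eq_smul_add]
    ring_nf
  have hclose : ‖2 * a - 1‖ < 1 := by
    simpa [dist_eq_norm, norm_sub_rev] using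
      dist_lt_dist_of_mem_inter_of_notMem_union hmid hz hz'
  have htriangle : 2 * ‖a - 1‖ ≤ ‖2 * a - 1‖ + 1 := by
    calc 2 * ‖a - 1‖ = ‖2 * (a - 1)‖ := by rw [norm_mul, Complex.norm_two]
      _ = ‖(2 * a - 1) - 1‖ := by ring_nf
      _ ≤ ‖2 * a - 1‖ + 1 := by simpa using norm_sub_le (2 * a - 1) 1
  linarith

theorem stmt_3 (a : ℂ) (h1 : ‖a‖ < 1) (h2 : 1 ≤ ‖a - 1‖)
    (h3 : ‖2 * a - 1‖ < 2) :
    Metric.closedBall (0 : ℂ) 1 ∩ Metric.closedBall (2 * a - 1) 1 ⊆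
      Metric.ball a 1 ∪ Metric.closedBall (a - 1) 1 :=
  stmt_3_general a h2
end

section
/- Let a₁, a₂, b, c₃ be real numbers with a₁² + a₂² < 1, |a₁ − 1|² + a₂² ≥ 1 (i.e., a = a₁ + i a₂ satisfies |a| < 1 and |a−1| ≥ 1), 0 ≤ b ≤ 1, |c₃| ≤ 1, and a₂ > 0. Then D := (1 − a₁b)² + a₂²(b² − c₃²) satisfies D ≥ |a|²b² − 2a₁b + 1 − a₂² ≥ a₂²(1/|a|² − 1) > 0. -/
theorem stmt_8 (a₁ a₂ b c₃ : ℝ)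
    (ha : a₁^2 + a₂^2 < 1) (ha1 : 1 ≤ (a₁ - 1)^2 + a₂^2)
    (hb0 : 0 ≤ b) (hb1 : b ≤ 1) (hc : |c₃| ≤ 1) (ha2 : 0 < a₂) :
    a₂^2 * (1 / (a₁^2 + a₂^2) - 1) ≤ (a₁^2 + a₂^2) * b^2 - 2 * a₁ * b + 1 - a₂^2 ∧
    (a₁^2 + a₂^2) * b^2 - 2 * a₁ * b + 1 - a₂^2 ≤ (1 - a₁*b)^2 + a₂^2 * (b^2 - c₃^2) ∧
    0 < a₂^2 * (1 / (a₁^2 + a₂^2) - 1) := by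
  have hr : 0 < a₁^2 + a₂^2 := by positivity
  have hc2 : c₃^2 ≤ 1 := by
    have := abs_nonneg c₃
    nlinarith [sq_abs c₃]
  have hinv : (1 / (a₁^2 + a₂^2)) * (a₁^2 + a₂^2) = 1 := by
    field_simp
  refine ⟨?_, by nlinarith, ?_⟩
  · rw [← sub_nonneg]
    have key : ((a₁^2 + a₂^2) * b^2 - 2 * a₁ * b + 1 - a₂^2 -
        a₂^2 * (1 / (a₁^2 + a₂^2) - 1)) * (a₁^2 + a₂^2) =
        ((a₁^2 + a₂^2) * b - a₁)^2 := by
      field_simp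
      ring
    nlinarith [sq_nonneg ((a₁^2 + a₂^2) * b - a₁)]
  · have : 0 < 1 / (a₁^2 + a₂^2) - 1 := by
      rw [sub_pos]
      exact one_lt_one_div hr ha
    positivity
end

section
/- Let a = a₁ + i a₂ with |a| < 1, |a−1| ≥ 1, a₂ > 0, and 0 ≤ b < 1. Suppose |a−ξ| ≥ 1 and |a+ξ| ≥ 1 where ξ = (1+i√3)/2 (the case a ∈ Ω_II). Define F(a,b) = [κ(a), 1/2] × [−b, 1] minus the corners SW(−1/2, 1−b) = [κ(a), −1/2) × [−b, 1−b) and SE(κ(−ā), 0) = (κ(−ā), 1/2] × [−b, 0), where κ(w) = Re(w)/2 − (Im(w)/|w|)√(1 − |w|²/4). Then the area of F(a,b) equals 1 − a₁b. -/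
open MeasureTheory

noncomputable def kappa (w : ℂ) : ℝ :=
  w.re / 2 - (w.im / ‖w‖) * Real.sqrt (1 - ‖w‖^2 / 4)

noncomputable def Fab (a : ℂ) (b : ℝ) : Set (ℝ × ℝ) :=
  (Set.Icc (kappa a) (1/2) ×ˢ Set.Icc (-b) 1) \
    ((Set.Ico (kappa a) (-(1/2)) ×ˢ Set.Ico (-b) (1 - b)) ∪
     (Set.Ioc (kappa (-(starRingEnd ℂ) a)) (1/2) ×ˢ Set.Ico (-b) 0))

open Set

/-!
Write `a = x + i y`, `N = ‖a‖²` and `t = (y / ‖a‖) √(1 - N/4) ≥ 0`, so that `κ(a) = x/2 - t` and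
`κ(-ā) = -x/2 - t`. The identity `N (2t)² = y² (4 - N)` turns `κ(a) ≤ -1/2` and `-1/2 ≤ κ(-ā)`
into `|N + x| ≤ √3 y` and `√3 y ≤ N - x`. Here `-(N + x) ≤ √3 y` is `|a + ξ| ≥ 1`,
`√3 y ≤ N - x` is `|a - ξ| ≥ 1`, and `N + x ≤ √3 y` is `|a - ξ²| ≤ 1`, which holds on the whole
upper-left quarter of the unit disc, where `|a - ξ| ≥ 1` confines `a`. Hence both removed corners
lie in the rectangle and are disjoint, and the area is
`(1/2 - κ(a))(1 + b) - (-1/2 - κ(a)) - (1/2 - κ(-ā)) b = 1 - x b`.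
-/

theorem volume_rect_diff_corners {c d b : ℝ} (hb : 0 ≤ b) (hc : c ≤ -(1/2))
    (hd : -(1/2) ≤ d) (hd' : d ≤ 1/2) :
    volume ((Icc c (1/2) ×ˢ Icc (-b) 1) \
      ((Ico c (-(1/2)) ×ˢ Ico (-b) (1 - b)) ∪ (Ioc d (1/2) ×ˢ Ico (-b) 0)))
      = ENNReal.ofReal (1 - (c - d) * b) := by
  have hsub : (Ico c (-(1/2)) ×ˢ Ico (-b) (1 - b)) ∪ (Ioc d (1/2) ×ˢ Ico (-b) 0)
      ⊆ Icc c (1/2) ×ˢ Icc (-b) 1 := by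
    apply union_subset <;> apply prod_mono
    · exact fun z hz => ⟨hz.1, by linarith [hz.2]⟩
    · exact fun z hz => ⟨hz.1, by linarith [hz.2]⟩
    · exact fun z hz => ⟨by linarith [hz.1], hz.2⟩
    · exact fun z hz => ⟨hz.1, by linarith [hz.2]⟩
  have hdisj : Disjoint (Ico c (-(1/2)) ×ˢ Ico (-b) (1 - b)) (Ioc d (1/2) ×ˢ Ico (-b) 0) :=
    disjoint_prod.mpr <| Or.inl <| Set.disjoint_left.mpr fun x h1 h2 => by
      linarith [h1.2, h2.1]
  have hmeas : MeasurableSet ((Ico c (-(1/2)) ×ˢ Ico (-b) (1 - b)) ∪ (Ioc d (1/2) ×ˢ Ico (-b) 0)) :=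
    (measurableSet_Ico.prod measurableSet_Ico).union (measurableSet_Ioc.prod measurableSet_Ico)
  have hunion : volume ((Ico c (-(1/2)) ×ˢ Ico (-b) (1 - b)) ∪ (Ioc d (1/2) ×ˢ Ico (-b) 0))
      = ENNReal.ofReal ((-(1/2) - c) + (1/2 - d) * b) := by
    rw [measure_union hdisj (measurableSet_Ioc.prod measurableSet_Ico), Measure.volume_eq_prod,
      Measure.prod_prod, Measure.prod_prod, Real.volume_Ico, Real.volume_Ico, Real.volume_Ioc,
      Real.volume_Ico, ← ENNReal.ofReal_mul (by linarith), ← ENNReal.ofReal_mul (by linarith),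
      ← ENNReal.ofReal_add (by nlinarith) (by nlinarith)]
    ring_nf
  rw [measure_sdiff hsub hmeas.nullMeasurableSet (by rw [hunion]; exact ENNReal.ofReal_ne_top),
    hunion, Measure.volume_eq_prod, Measure.prod_prod, Real.volume_Icc, Real.volume_Icc,
    ← ENNReal.ofReal_mul (by linarith), ← ENNReal.ofReal_sub _ (by nlinarith)]
  ring_nf

theorem sq_norm_eq_re_sq_add_im_sq (w : ℂ) : ‖w‖ ^ 2 = w.re ^ 2 + w.im ^ 2 := by
  rw [Complex.sq_norm, Complex.normSq_apply]
  ring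

theorem kappa_neg_conj (w : ℂ) : kappa (-(starRingEnd ℂ) w) = kappa w - w.re := by
  simp only [kappa, Complex.neg_re, Complex.conj_re, Complex.neg_im, Complex.conj_im, neg_neg,
    norm_neg, Complex.norm_conj]
  ring

theorem one_le_norm_sub_iff {a z : ℂ} (hz : ‖z‖ = 1) :
    1 ≤ ‖a - z‖ ↔ 2 * (a * (starRingEnd ℂ) z).re ≤ ‖a‖ ^ 2 := by
  rw [← one_le_sq_iff₀ (norm_nonneg _), Complex.sq_norm, Complex.normSq_sub,
    ← Complex.sq_norm z, hz, Complex.sq_norm]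
  constructor <;> intro h <;> linarith

theorem one_add_I_mul_sqrt_three_div_two : (1 + Complex.I * √3) / 2 = ⟨1/2, √3/2⟩ :=
  Complex.ext (by simp) (by simp)

theorem norm_one_add_I_mul_sqrt_three_div_two : ‖(1 + Complex.I * √3) / 2‖ = 1 := by
  rw [one_add_I_mul_sqrt_three_div_two, Complex.norm_def, Complex.normSq_mk, Real.sqrt_eq_one]
  nlinarith [Real.sq_sqrt (show (0:ℝ) ≤ 3 by norm_num)]

theorem one_le_norm_sub_xi_iff (a : ℂ) :
    1 ≤ ‖a - (1 + Complex.I * √3) / 2‖ ↔ a.re + √3 * a.im ≤ ‖a‖ ^ 2 := by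
  rw [one_le_norm_sub_iff norm_one_add_I_mul_sqrt_three_div_two, one_add_I_mul_sqrt_three_div_two]
  simp only [Complex.mul_re, Complex.conj_re, Complex.conj_im]
  ring_nf

theorem one_le_norm_add_xi_iff (a : ℂ) :
    1 ≤ ‖a + (1 + Complex.I * √3) / 2‖ ↔ -(a.re + √3 * a.im) ≤ ‖a‖ ^ 2 := by
  rw [← sub_neg_eq_add, one_le_norm_sub_iff (by rw [norm_neg, norm_one_add_I_mul_sqrt_three_div_two]),
    one_add_I_mul_sqrt_three_div_two]
  simp only [Complex.mul_re, map_neg, Complex.neg_re, Complex.neg_im, Complex.conj_re,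
    Complex.conj_im]
  ring_nf

/-- `u + i y` lies in the open unit disc around `ξ`; with `u = -x` this is `|x + i y - ξ²| < 1`. -/
theorem lt_add_sqrt_three_mul {u y N : ℝ} (hu : 0 ≤ u) (hy : 0 < y) (hN : N = u ^ 2 + y ^ 2)
    (hN1 : N < 1) : N < u + √3 * y := by
  have h3 : √3 ^ 2 = 3 := Real.sq_sqrt (by norm_num)
  have hpos : 0 < u + √3 * y := by positivity
  have hsq : N ≤ (u + √3 * y) ^ 2 := by
    nlinarith [mul_nonneg (mul_nonneg hu (Real.sqrt_nonneg 3)) hy.le]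
  nlinarith

theorem kappa_le_re_div_two {w : ℂ} (him : 0 ≤ w.im) : kappa w ≤ w.re / 2 := by
  unfold kappa
  have : 0 ≤ w.im / ‖w‖ * √(1 - ‖w‖ ^ 2 / 4) := by positivity
  linarith

theorem sq_norm_mul_sq_re_sub_two_mul_kappa {w : ℂ} (hw : w ≠ 0) (hw2 : ‖w‖ ≤ 2) :
    ‖w‖ ^ 2 * (w.re - 2 * kappa w) ^ 2 = w.im ^ 2 * (4 - ‖w‖ ^ 2) := by
  have hr : ‖w‖ ≠ 0 := norm_ne_zero_iff.mpr hw
  rw [kappa, show w.re - 2 * (w.re / 2 - w.im / ‖w‖ * √(1 - ‖w‖ ^ 2 / 4))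
      = 2 * (w.im / ‖w‖ * √(1 - ‖w‖ ^ 2 / 4)) by ring,
    mul_pow, mul_pow, div_pow, Real.sq_sqrt (by nlinarith [norm_nonneg w])]
  field_simp
  ring

theorem kappa_le_neg_half {w : ℂ} (hw2 : ‖w‖ ≤ 2) (him : 0 < w.im)
    (h : |‖w‖ ^ 2 + w.re| ≤ √3 * w.im) : kappa w ≤ -(1/2) := by
  have hw : w ≠ 0 := fun h0 => by simp [h0] at him
  have hN := sq_norm_eq_re_sq_add_im_sq w
  have hid := sq_norm_mul_sq_re_sub_two_mul_kappa hw hw2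
  have h3 : √3 ^ 2 = 3 := Real.sq_sqrt (by norm_num)
  have hsq : (‖w‖ ^ 2 + w.re) ^ 2 ≤ (√3 * w.im) ^ 2 := sq_le_sq' (abs_le.mp h).1 (abs_le.mp h).2
  have hmul : ‖w‖ ^ 2 * (1 + w.re) ^ 2 ≤ ‖w‖ ^ 2 * (w.re - 2 * kappa w) ^ 2 := by
    rw [hid]; nlinarith
  have := abs_le_of_sq_le_sq' (le_of_mul_le_mul_left hmul (by positivity))
    (by linarith [kappa_le_re_div_two him.le])
  linarith

theorem neg_half_le_kappa_sub_re {w : ℂ} (hw1 : ‖w‖ ≤ 1) (him : 0 < w.im)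
    (h : √3 * w.im ≤ ‖w‖ ^ 2 - w.re) : -(1/2) ≤ kappa w - w.re := by
  have hw : w ≠ 0 := fun h0 => by simp [h0] at him
  have hN := sq_norm_eq_re_sq_add_im_sq w
  have hid := sq_norm_mul_sq_re_sub_two_mul_kappa hw (hw1.trans one_le_two)
  have h3 : √3 ^ 2 = 3 := Real.sq_sqrt (by norm_num)
  have hsq : (√3 * w.im) ^ 2 ≤ (‖w‖ ^ 2 - w.re) ^ 2 := pow_le_pow_left₀ (by positivity) h 2
  have hmul : ‖w‖ ^ 2 * (w.re - 2 * kappa w) ^ 2 ≤ ‖w‖ ^ 2 * (1 - w.re) ^ 2 := by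
    rw [hid]; nlinarith
  have := abs_le_of_sq_le_sq' (le_of_mul_le_mul_left hmul (by positivity))
    (by linarith [le_abs_self w.re, Complex.abs_re_le_norm w])
  linarith

theorem stmt_16_general (a : ℂ) (ha : ‖a‖ < 1)
    (him : 0 < a.im) (b : ℝ) (hb0 : 0 ≤ b)
    (hxi1 : 1 ≤ ‖a - (1 + Complex.I * Real.sqrt 3) / 2‖)
    (hxi2 : 1 ≤ ‖a + (1 + Complex.I * Real.sqrt 3) / 2‖) :
    volume (Fab a b) = ENNReal.ofReal (1 - a.re * b) := by
  have hN := sq_norm_eq_re_sq_add_im_sq a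
  have hN1 : ‖a‖ ^ 2 < 1 := by nlinarith [norm_nonneg a]
  have h1 := (one_le_norm_sub_xi_iff a).mp hxi1
  have h2 := (one_le_norm_add_xi_iff a).mp hxi2
  have hre : a.re ≤ 0 := by
    by_contra! hx
    linarith [lt_add_sqrt_three_mul hx.le him hN hN1]
  have h3 : ‖a‖ ^ 2 + a.re ≤ √3 * a.im := by
    linarith [lt_add_sqrt_three_mul (neg_nonneg.mpr hre) him (by rw [hN]; ring) hN1]
  have hκ := kappa_le_neg_half (by linarith) him (abs_le.mpr ⟨by linarith, h3⟩)
  rw [Fab, kappa_neg_conj, volume_rect_diff_corners hb0 hκ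
    (neg_half_le_kappa_sub_re ha.le him (by linarith))
    (by linarith [neg_abs_le a.re, Complex.abs_re_le_norm a])]
  ring_nf

theorem stmt_16 (a : ℂ) (ha : ‖a‖ < 1) (ha1 : 1 ≤ ‖a - 1‖)
    (him : 0 < a.im) (b : ℝ) (hb0 : 0 ≤ b) (hb1 : b < 1)
    (hxi1 : 1 ≤ ‖a - (1 + Complex.I * Real.sqrt 3) / 2‖)
    (hxi2 : 1 ≤ ‖a + (1 + Complex.I * Real.sqrt 3) / 2‖) :
    volume (Fab a b) = ENNReal.ofReal (1 - a.re * b) :=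
  stmt_16_general a ha him b hb0 hxi1 hxi2
end
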